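/- Let M be a real 2×2 matrix with trace M = 0 and det M = 0 (equivalently M² = 0), let A = (A⁺, A⁻), Ã = (Ã⁺, Ã⁻) ∈ ℂ², and let f = (f⁺,f⁻), g = (g⁺,g⁻) : (0,∞) → ℂ² satisfy lim_{r→0⁺} r^{−1/2} | f(r) − (M log r + I₂)·(A⁺, A⁻) | = 0 and lim_{r→0⁺} r^{−1/2} | g(r) − (M log r + I₂)·(Ã⁺, Ã⁻) | = 0. Then lim_{r→0⁺} [ f⁺(r) conj(g⁻(r)) − f⁻(r) conj(g⁺(r)) ] = A⁺ conj(Ã⁻) − A⁻ conj(Ã⁺). -/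

import Mathlib

open MeasureTheory Real Filter

noncomputable section

/-!
Write `f = u + e` and `g = v + e'` with `u(r) = P(r) A`, `v(r) = P(r) Ã`, `P(r) = M log r + I₂`.
The Wronskian `W(x, y) = x⁺ ȳ⁻ - x⁻ ȳ⁺` satisfies `W(P x, P y) = det P · W(x, y)` for real `P`, and
`det P(r) = 1 + log r · tr M + log² r · det M = 1`, so `W(u, v) = W(A, Ã)` for every `r`.
The remainder `W(f, g) - W(u, v) = W(u, e') + W(e, g)` tends to zero, because `e, e'` are
`o(r^{1/2})`, while `u` and `g` are `O(log r)` and `r^{1/2} log r → 0`.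
-/

open Asymptotics ComplexConjugate Matrix Topology

def wronskian (x y : Fin 2 → ℂ) : ℂ := x 0 * conj (y 1) - x 1 * conj (y 0)

lemma wronskian_sub_wronskian (x y u v : Fin 2 → ℂ) :
    wronskian x y - wronskian u v = wronskian u (y - v) + wronskian (x - u) y := by
  simp only [wronskian, Pi.sub_apply, map_sub]
  ring

lemma wronskian_mulVec_ofReal (P : Matrix (Fin 2) (Fin 2) ℝ) (x y : Fin 2 → ℂ) :
    wronskian (P.map (↑) *ᵥ x) (P.map (↑) *ᵥ y) = P.det * wronskian x y := by
  simp only [wronskian, mulVec, dotProduct, Fin.sum_univ_two, map_apply, map_add, map_mul,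
    Complex.conj_ofReal, det_fin_two]
  push_cast
  ring

lemma norm_wronskian_le (x y : Fin 2 → ℂ) : ‖wronskian x y‖ ≤ 2 * (‖x‖ * ‖y‖) := by
  have h (i j : Fin 2) : ‖x i * conj (y j)‖ ≤ ‖x‖ * ‖y‖ := by
    rw [norm_mul, Complex.norm_conj]
    exact mul_le_mul (norm_le_pi_norm x i) (norm_le_pi_norm y j) (norm_nonneg _) (norm_nonneg _)
  calc ‖wronskian x y‖ ≤ ‖x 0 * conj (y 1)‖ + ‖x 1 * conj (y 0)‖ := norm_sub_le _ _
    _ ≤ 2 * (‖x‖ * ‖y‖) := by linarith [h 0 1, h 1 0]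

lemma tendsto_wronskian_zero {α : Type*} {l : Filter α} {x y : α → Fin 2 → ℂ}
    (h : Tendsto (fun a => ‖x a‖ * ‖y a‖) l (𝓝 0)) :
    Tendsto (fun a => wronskian (x a) (y a)) l (𝓝 0) :=
  squeeze_zero_norm (fun a => norm_wronskian_le (x a) (y a)) (by simpa using h.const_mul 2)

lemma det_smul_add_one_eq_one {R : Type*} [CommRing R] {M : Matrix (Fin 2) (Fin 2) R}
    (htr : M.trace = 0) (hdet : M.det = 0) (t : R) : (t • M + 1).det = 1 := by
  rw [trace_fin_two] at htr
  rw [det_fin_two] at hdet ⊢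
  simp only [Matrix.add_apply, Matrix.smul_apply, smul_eq_mul, one_apply_eq, one_apply_ne,
    zero_ne_one, one_ne_zero, ne_eq, not_false_eq_true, add_zero]
  linear_combination t * htr + t ^ 2 * hdet

-- `Fin 2 → ℂ` carries the sup norm, the hypotheses the Euclidean one.
lemma norm_le_sqrt_sq_add_sq (x : Fin 2 → ℂ) : ‖x‖ ≤ √(‖x 0‖ ^ 2 + ‖x 1‖ ^ 2) := by
  refine (pi_norm_le_iff_of_nonneg (sqrt_nonneg _)).2 fun i => ?_
  rw [Real.le_sqrt (norm_nonneg _) (by positivity)]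
  fin_cases i <;> simp

lemma isLittleO_rpow_half_of_tendsto {e : ℝ → Fin 2 → ℂ}
    (h : Tendsto (fun r => √(‖e r 0‖ ^ 2 + ‖e r 1‖ ^ 2) * r ^ (-(1 / 2 : ℝ))) (𝓝[>] 0) (𝓝 0)) :
    e =o[𝓝[>] 0] fun r => r ^ (1 / 2 : ℝ) := by
  refine (IsBigO.of_norm_le fun r => norm_le_sqrt_sq_add_sq (e r)).trans_isLittleO ?_
  refine (isLittleO_iff_tendsto' ?_).2 (h.congr' ?_)
  · filter_upwards [self_mem_nhdsWithin] with r hr h0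
    exact absurd h0 (rpow_pos_of_pos hr _).ne'
  · filter_upwards [self_mem_nhdsWithin] with r hr
    rw [rpow_neg hr.le]
    exact (div_eq_mul_inv _ _).symm

lemma tendsto_norm_log_nhdsGT_zero : Tendsto (fun r => ‖log r‖) (𝓝[>] 0) atTop :=
  tendsto_abs_atBot_atTop.comp tendsto_log_nhdsGT_zero

lemma rpow_half_isBigO_log : (fun r : ℝ => r ^ (1 / 2 : ℝ)) =O[𝓝[>] 0] log := by
  have h : Tendsto (fun r : ℝ => r ^ (1 / 2 : ℝ)) (𝓝[>] 0) (𝓝 0) := by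
    simpa using (continuousAt_rpow_const 0 _ (Or.inr (by norm_num : (0 : ℝ) ≤ 1 / 2))).tendsto
      |>.mono_left nhdsWithin_le_nhds
  exact (h.isBigO_one ℝ).trans
    (isLittleO_const_left.2 (Or.inr tendsto_norm_log_nhdsGT_zero)).isBigO

lemma mulVec_log_smul_add_one_isBigO_log (M : Matrix (Fin 2) (Fin 2) ℝ) (x : Fin 2 → ℂ) :
    (fun r => (log r • M + 1).map ((↑) : ℝ → ℂ) *ᵥ x) =O[𝓝[>] 0] log := by
  have hsplit (r : ℝ) : (log r • M + 1).map ((↑) : ℝ → ℂ) *ᵥ x =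
      (log r : ℂ) • (M.map (↑) *ᵥ x) + x := by
    ext i
    fin_cases i <;> simp [mulVec, dotProduct, Fin.sum_univ_two, Matrix.one_apply] <;> ring
  simp_rw [hsplit]
  refine IsBigO.add ?_ (isLittleO_const_left.2 (Or.inr tendsto_norm_log_nhdsGT_zero)).isBigO
  exact IsBigO.of_bound ‖M.map ((↑) : ℝ → ℂ) *ᵥ x‖ (Eventually.of_forall fun r => by
    rw [norm_smul, Complex.norm_real, mul_comm])

lemma tendsto_norm_mul_norm_zero {x y : ℝ → Fin 2 → ℂ}
    (hx : x =o[𝓝[>] 0] fun r => r ^ (1 / 2 : ℝ)) (hy : y =O[𝓝[>] 0] log) :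
    Tendsto (fun r => ‖x r‖ * ‖y r‖) (𝓝[>] 0) (𝓝 0) :=
  (hx.norm_left.mul_isBigO hy.norm_left).trans_tendsto <| by
    simpa only [mul_comm] using tendsto_log_mul_rpow_nhdsGT_zero (by norm_num : (0 : ℝ) < 1 / 2)

/-- boundary limit of the Wronskian-type expression in the critical
case δ = 0. -/
theorem wronskian_limit_critical (M : Matrix (Fin 2) (Fin 2) ℝ)
    (hMtr : M.trace = 0) (hMdet : M.det = 0) (Ap Am Bp Bm : ℂ) (fp fm gp gm : ℝ → ℂ)
    (hf : Tendsto (fun r : ℝ =>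
        Real.sqrt
          (‖fp r -
              ((Real.log r • M + 1).map (fun t => (t : ℂ))).mulVec ![Ap, Am] 0‖ ^ 2 +
            ‖fm r -
              ((Real.log r • M + 1).map (fun t => (t : ℂ))).mulVec ![Ap, Am] 1‖ ^ 2) *
          r ^ (-(1 / 2 : ℝ))) (nhdsWithin 0 (Set.Ioi 0)) (nhds 0))
    (hg : Tendsto (fun r : ℝ =>
        Real.sqrt
          (‖gp r -
              ((Real.log r • M + 1).map (fun t => (t : ℂ))).mulVec ![Bp, Bm] 0‖ ^ 2 +
            ‖gm r -
              ((Real.log r • M + 1).map (fun t => (t : ℂ))).mulVec ![Bp, Bm] 1‖ ^ 2) *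
          r ^ (-(1 / 2 : ℝ))) (nhdsWithin 0 (Set.Ioi 0)) (nhds 0)) :
    Tendsto (fun r : ℝ => fp r * (starRingEnd ℂ) (gm r) - fm r * (starRingEnd ℂ) (gp r))
      (nhdsWithin 0 (Set.Ioi 0))
      (nhds (Ap * (starRingEnd ℂ) Bm - Am * (starRingEnd ℂ) Bp)) := by
  set u := fun r => (log r • M + 1).map ((↑) : ℝ → ℂ) *ᵥ ![Ap, Am]
  set v := fun r => (log r • M + 1).map ((↑) : ℝ → ℂ) *ᵥ ![Bp, Bm]
  have he : (fun r => ![fp r, fm r] - u r) =o[𝓝[>] 0] fun r => r ^ (1 / 2 : ℝ) :=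
    isLittleO_rpow_half_of_tendsto hf
  have he' : (fun r => ![gp r, gm r] - v r) =o[𝓝[>] 0] fun r => r ^ (1 / 2 : ℝ) :=
    isLittleO_rpow_half_of_tendsto hg
  have hu : u =O[𝓝[>] 0] log := mulVec_log_smul_add_one_isBigO_log M _
  have hv : v =O[𝓝[>] 0] log := mulVec_log_smul_add_one_isBigO_log M _
  have hg_log : (fun r => ![gp r, gm r]) =O[𝓝[>] 0] log :=
    ((he'.isBigO.trans rpow_half_isBigO_log).add hv).congr_left fun r => sub_add_cancel _ _
  have huv (r : ℝ) : wronskian (u r) (v r) = wronskian ![Ap, Am] ![Bp, Bm] := by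
    simp only [u, v, wronskian_mulVec_ofReal, det_smul_add_one_eq_one hMtr hMdet,
      Complex.ofReal_one, one_mul]
  have hrem_v : Tendsto (fun r => wronskian (u r) (![gp r, gm r] - v r)) (𝓝[>] 0) (𝓝 0) :=
    tendsto_wronskian_zero <| by simpa only [mul_comm] using tendsto_norm_mul_norm_zero he' hu
  have hrem_u : Tendsto (fun r => wronskian (![fp r, fm r] - u r) ![gp r, gm r]) (𝓝[>] 0) (𝓝 0) :=
    tendsto_wronskian_zero (tendsto_norm_mul_norm_zero he hg_log)
  have hrem := hrem_v.add hrem_u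
  rw [add_zero] at hrem
  rw [← tendsto_sub_nhds_zero_iff]
  refine hrem.congr fun r => ?_
  rw [← wronskian_sub_wronskian, huv]
  rfl
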